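/- arXiv:2206.07774 — 9 statements merged into one kernel-verified Lean document; each statement's English description precedes it below -/
import Mathlib

section
/- Let K > 0 and Λ ∈ ℝ, and set ξ₍₋₎ = 1/6 − 1/√1080 and ξ₍₊₎ = 1/6 + 1/√1080. For ξ ∈ (ξ₍₋₎, ξ₍₊₎) define H₍₊₎(ξ) = sqrt( 1440·K · (1 + sqrt(1 − (Λ/(2160·K))·(1 − 30·(6ξ−1)²)))/(1 − 30·(6ξ−1)²) ). Then for every ξ ∈ (ξ₍₋₎, ξ₍₊₎) with Λ ≤ 2160·K, the number H = H₍₊₎(ξ) is a positive real number satisfying the massless consistency equation 0 = (1/960 − (6ξ−1)²/32)·H⁴ − 3·K·H² + Λ·K. -/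
/-!
With `a = 1 - 30 (6ξ - 1)²` the coefficient of `H⁴` is `a / 960`, so the consistency equation is a
quadratic `a/960 · x² - 3K x + ΛK = 0` in `x = H²`. Its discriminant is `9K² (1 - Λ a / (2160 K))`,
and `H₍₊₎²` is the root `1440 K (1 + √(1 - Λ a / (2160 K))) / a` given by the quadratic formula.
On `(ξ₍₋₎, ξ₍₊₎)` we have `0 < a ≤ 1`, which together with `Λ ≤ 2160 K` makes the discriminant
nonnegative and this root positive.
-/

open Real

lemma thirty_mul_sq_six_mul_sub_one_lt_one {ξ : ℝ}
    (hξ1 : 1/6 - 1/√1080 < ξ) (hξ2 : ξ < 1/6 + 1/√1080) :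
    30 * (6 * ξ - 1) ^ 2 < 1 := by
  set d := 1 / √1080
  have hsq : (6 * d) ^ 2 = 1 / 30 := by
    rw [mul_pow, div_pow, one_pow, sq_sqrt (by norm_num)]
    norm_num
  have hlt : (6 * ξ - 1) ^ 2 < (6 * d) ^ 2 := sq_lt_sq' (by linarith) (by linarith)
  linarith

lemma one_sub_mul_nonneg_of_le_one {t a : ℝ} (ht : t ≤ 1) (ha₀ : 0 ≤ a) (ha₁ : a ≤ 1) :
    0 ≤ 1 - t * a := by
  nlinarith

lemma consistency_quadratic_eq_zero {K Λ a : ℝ} (hK : K ≠ 0) (ha : a ≠ 0)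
    (hr : 0 ≤ 1 - Λ / (2160 * K) * a) :
    let x := 1440 * K * ((1 + √(1 - Λ / (2160 * K) * a)) / a)
    a / 960 * x ^ 2 - 3 * K * x + Λ * K = 0 := by
  intro x
  have hdiscrim : discrim (a / 960) (-3 * K) (Λ * K)
      = (3 * K * √(1 - Λ / (2160 * K) * a)) * (3 * K * √(1 - Λ / (2160 * K) * a)) := by
    have hKt : K * (Λ / (2160 * K)) = Λ / 2160 := by field_simp
    rw [discrim]
    linear_combination (9 * K * a) * hKt - 9 * K ^ 2 * mul_self_sqrt hr
  have hroot : x = (-(-3 * K) + 3 * K * √(1 - Λ / (2160 * K) * a)) / (2 * (a / 960)) := by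
    simp only [x]
    field_simp
    ring
  have := (quadratic_eq_zero_iff (div_ne_zero ha (by norm_num)) hdiscrim x).mpr (.inl hroot)
  linear_combination this

theorem massless_Hplus_solution (K Λ ξ : ℝ) (hK : 0 < K)
    (hξ1 : 1/6 - 1/Real.sqrt 1080 < ξ) (hξ2 : ξ < 1/6 + 1/Real.sqrt 1080)
    (hΛ : Λ ≤ 2160 * K) :
    0 < Real.sqrt (1440 * K *
        ((1 + Real.sqrt (1 - (Λ / (2160 * K)) * (1 - 30 * (6 * ξ - 1)^2))) /
          (1 - 30 * (6 * ξ - 1)^2))) ∧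
    0 = (1/960 - (6 * ξ - 1)^2 / 32) *
          (Real.sqrt (1440 * K *
            ((1 + Real.sqrt (1 - (Λ / (2160 * K)) * (1 - 30 * (6 * ξ - 1)^2))) /
              (1 - 30 * (6 * ξ - 1)^2))))^4
        - 3 * K * (Real.sqrt (1440 * K *
            ((1 + Real.sqrt (1 - (Λ / (2160 * K)) * (1 - 30 * (6 * ξ - 1)^2))) /
              (1 - 30 * (6 * ξ - 1)^2))))^2
        + Λ * K := by
  have ha : 0 < 1 - 30 * (6 * ξ - 1) ^ 2 := by
    linarith [thirty_mul_sq_six_mul_sub_one_lt_one hξ1 hξ2]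
  have hr : 0 ≤ 1 - Λ / (2160 * K) * (1 - 30 * (6 * ξ - 1) ^ 2) :=
    one_sub_mul_nonneg_of_le_one ((div_le_one (by positivity)).mpr hΛ) ha.le
      (by linarith [sq_nonneg (6 * ξ - 1)])
  set x := 1440 * K * ((1 + √(1 - Λ / (2160 * K) * (1 - 30 * (6 * ξ - 1) ^ 2))) /
    (1 - 30 * (6 * ξ - 1) ^ 2))
  have hx : 0 < x := by positivity
  refine ⟨sqrt_pos.mpr hx, ?_⟩
  rw [show (1/960 - (6 * ξ - 1) ^ 2 / 32 : ℝ) = (1 - 30 * (6 * ξ - 1) ^ 2) / 960 by ring,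
    show √x ^ 4 = (√x ^ 2) ^ 2 by ring, sq_sqrt hx.le]
  exact (consistency_quadratic_eq_zero hK.ne' ha.ne' hr).symm
end

section
/- Let K > 0 and Λ = 2160·K, and set H_vac = sqrt(Λ/3). Then for all ξ ∈ ℝ and H > 0, the equation 0 = (1/960 − (6ξ−1)²/32)·H⁴ − 3·K·H² + Λ·K holds if and only if ξ − 1/6 = (1/√1080)·(1 − 2·H_vac²/H²) or ξ − 1/6 = −(1/√1080)·(1 − 2·H_vac²/H²). -/
/-!
For `Λ = 2160 K` the quartic is, up to the factor `1/960`, the difference of squares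
`(H² - 1440 K)² - 30 (6ξ - 1)² H⁴`, and `1440 K = 2 H_vac²`. Dividing by `H⁴` it vanishes
exactly when `(ξ - 1/6)² = (1 - 2 H_vac² / H²)² / 1080`, i.e. on the two stated branches.
-/

noncomputable def masslessQuartic (K Λ ξ H : ℝ) : ℝ :=
  (1/960 - (6 * ξ - 1)^2 / 32) * H^4 - 3 * K * H^2 + Λ * K

lemma masslessQuartic_degenerate (K ξ H : ℝ) :
    masslessQuartic K (2160 * K) ξ H = ((H^2 - 1440 * K)^2 - 30 * (6 * ξ - 1)^2 * H^4) / 960 := by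
  unfold masslessQuartic; ring

lemma sq_sqrt_degenerate_div_three {K : ℝ} (hK : 0 ≤ K) :
    Real.sqrt (2160 * K / 3) ^ 2 = 720 * K := by
  rw [Real.sq_sqrt (by positivity)]; ring

lemma masslessQuartic_degenerate_eq_zero_iff (K ξ : ℝ) {H : ℝ} (hH : H ≠ 0) :
    masslessQuartic K (2160 * K) ξ H = 0 ↔
      (ξ - 1/6)^2 = ((1/Real.sqrt 1080) * (1 - 1440 * K / H^2))^2 := by
  rw [masslessQuartic_degenerate, mul_pow, div_pow, Real.sq_sqrt (by norm_num)]
  field_simp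
  constructor <;> intro h <;> linarith

theorem massless_degenerate_case (K Λ : ℝ) (hK : 0 < K) (hΛ : Λ = 2160 * K)
    (ξ H : ℝ) (hH : 0 < H) :
    (0 = (1/960 - (6 * ξ - 1)^2 / 32) * H^4 - 3 * K * H^2 + Λ * K) ↔
      (ξ - 1/6 = (1/Real.sqrt 1080) * (1 - 2 * (Real.sqrt (Λ/3))^2 / H^2) ∨
       ξ - 1/6 = -((1/Real.sqrt 1080) * (1 - 2 * (Real.sqrt (Λ/3))^2 / H^2))) := by
  subst hΛ
  rw [sq_sqrt_degenerate_div_three hK.le, ← sq_eq_sq_iff_eq_or_eq_neg, eq_comm,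
    ← masslessQuartic]
  convert masslessQuartic_degenerate_eq_zero_iff K ξ hH.ne' using 4
  ring
end

section
/- Let w ∈ ℝ with w < 0 and w·exp(w) = −exp(−2). Set e₁ = −(15/2)·w² − 15·w, α = sqrt(−w), and s(α) = α²/4 − 1/2 − e₁/(30·α²) − log α. Then s(α) = 0 and s'(α) = 0, i.e. α is a degenerate (double) zero of s. -/
/-!
Writing `α² = -w`, the defining relation `w e^w = -e^{-2}` says exactly that
`log α = -1 - w/2`. With `e₁ = -(15/2) w² - 15 w` the rational part of `s(α)` collapses to
`-w/2 - 1`, and `2α² · α s'(α) = α⁴ - 2α² + 2e₁/15 = w² + 2w - (w² + 2w) = 0`.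
-/

open Real

theorem Real.log_neg_eq_sub_of_mul_exp_eq_neg_exp {w c : ℝ} (hw : w < 0)
    (h : w * exp w = -exp c) : log (-w) = c - w := by
  have hprod : -w * exp w = exp c := by linarith
  have hlog := congrArg log hprod
  rw [log_mul (neg_ne_zero.2 hw.ne) (exp_ne_zero w), log_exp, log_exp] at hlog
  linarith

/-- The function `s` of the paper, with `e₁` as a parameter. -/
noncomputable def dominantAsymptotic (e₁ α : ℝ) : ℝ :=
  α ^ 2 / 4 - 1 / 2 - e₁ / (30 * α ^ 2) - log α

theorem hasDerivAt_dominantAsymptotic (e₁ : ℝ) {α : ℝ} (hα : α ≠ 0) :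
    HasDerivAt (dominantAsymptotic e₁) (α / 2 + e₁ / (15 * α ^ 3) - 1 / α) α := by
  have hquad : HasDerivAt (fun x : ℝ => x ^ 2 / 4 - 1 / 2) (α / 2) α :=
    (((hasDerivAt_pow 2 α).div_const 4).sub_const (1 / 2)).congr_deriv (by ring)
  have hden : HasDerivAt (fun x : ℝ => 30 * x ^ 2) (60 * α) α :=
    ((hasDerivAt_pow 2 α).const_mul 30).congr_deriv (by ring)
  have hfrac : HasDerivAt (fun x : ℝ => e₁ / (30 * x ^ 2)) (-(e₁ / (15 * α ^ 3))) α :=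
    ((hasDerivAt_const α e₁).div hden (by positivity)).congr_deriv (by field_simp; ring)
  exact ((hquad.sub hfrac).sub (hasDerivAt_log hα)).congr_deriv (by ring)

theorem lambertW_double_zero (w : ℝ) (hw : w < 0)
    (hW : w * Real.exp w = -Real.exp (-2)) :
    (Real.sqrt (-w))^2/4 - 1/2
        - (-(15/2) * w^2 - 15 * w)/(30 * (Real.sqrt (-w))^2)
        - Real.log (Real.sqrt (-w)) = 0 ∧
    deriv (fun α : ℝ =>
        α^2/4 - 1/2 - (-(15/2) * w^2 - 15 * w)/(30 * α^2) - Real.log α)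
      (Real.sqrt (-w)) = 0 := by
  have hα : 0 < √(-w) := sqrt_pos.2 (neg_pos.2 hw)
  have hsq : √(-w) ^ 2 = -w := sq_sqrt (neg_nonneg.2 hw.le)
  have hlog : log √(-w) = -1 - w / 2 := by
    rw [log_sqrt (neg_nonneg.2 hw.le), log_neg_eq_sub_of_mul_exp_eq_neg_exp hw hW]
    ring
  refine ⟨?_, ?_⟩
  · have hw0 : w ≠ 0 := hw.ne
    rw [hsq, hlog]
    field_simp
    ring
  · change deriv (dominantAsymptotic _) _ = 0
    rw [(hasDerivAt_dominantAsymptotic _ hα.ne').deriv]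
    field_simp
    linear_combination (√(-w) ^ 2 - w - 2) * hsq
end

section
/- Let e₁ < 0 and define X₍₋₎(h) = 2 + 1/h² − sqrt(2/15 + (1 − 2e₁/15)/h⁴) for h > 0, and h_crit = sqrt( sqrt((15/29)² − e₁/29) − 15/29 ). Then h_crit > 0, and for all h > 0: X₍₋₎(h) > 0 if and only if h > h_crit. -/
/-! Squaring turns `X₍₋₎(h) > 0` into `(2 + 1/h²)² > 2/15 + (1 - 2e₁/15)/h⁴`, i.e. after clearing
denominators into `29 h⁴ + 30 h² + e₁ > 0`. For `h² ≥ 0` this quadratic in `h²` is positive exactly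
beyond its larger root `h_crit² = √((15/29)² - e₁/29) - 15/29`, which is positive because `e₁ < 0`. -/

open Real

lemma sub_sqrt_pos_iff {a b : ℝ} (ha : 0 < a) : 0 < a - √b ↔ b < a ^ 2 := by
  rw [sub_pos, sqrt_lt' ha]

lemma sqrt_discr_sub_lt_iff {p q y : ℝ} (hq : q ≤ p ^ 2) (hy : 0 ≤ y + p) :
    √(p ^ 2 - q) - p < y ↔ 0 < y ^ 2 + 2 * p * y + q := by
  rw [sub_lt_iff_lt_add, sqrt_lt (sub_nonneg.mpr hq) hy]
  constructor <;> intro h <;> linarith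

lemma sq_sub_eq_quartic (e h : ℝ) (hh : h ≠ 0) :
    (2 + 1 / h ^ 2) ^ 2 - (2 / 15 + (1 - 2 * e / 15) / h ^ 4)
      = 2 * (29 * h ^ 4 + 30 * h ^ 2 + e) / (15 * h ^ 4) := by
  field_simp
  ring

lemma lt_sq_iff_quartic_pos (e : ℝ) {h : ℝ} (hh : h ≠ 0) :
    2 / 15 + (1 - 2 * e / 15) / h ^ 4 < (2 + 1 / h ^ 2) ^ 2 ↔ 0 < 29 * h ^ 4 + 30 * h ^ 2 + e := by
  rw [← sub_pos, sq_sub_eq_quartic e h hh, div_pos_iff_of_pos_right (by positivity),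
    mul_pos_iff_of_pos_left two_pos]

theorem Xminus_positivity (e₁ : ℝ) (he₁ : e₁ < 0) :
    0 < Real.sqrt (Real.sqrt ((15/29)^2 - e₁/29) - 15/29) ∧
    ∀ h : ℝ, 0 < h →
      (0 < 2 + 1/h^2 - Real.sqrt (2/15 + (1 - 2 * e₁ / 15)/h^4) ↔
        Real.sqrt (Real.sqrt ((15/29)^2 - e₁/29) - 15/29) < h) := by
  have hq : e₁ / 29 ≤ (15 / 29) ^ 2 := by linarith
  have hroot : 0 < √((15 / 29) ^ 2 - e₁ / 29) - 15 / 29 := by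
    rw [sub_pos, lt_sqrt (by norm_num)]
    linarith
  refine ⟨sqrt_pos.mpr hroot, fun h hh => ?_⟩
  rw [sub_sqrt_pos_iff (by positivity), lt_sq_iff_quartic_pos e₁ hh.ne', sqrt_lt' hh,
    sqrt_discr_sub_lt_iff hq (by positivity)]
  constructor <;> intro hpos <;> linarith
end

section
/- Let e₁ < 0 and define X₍₋₎(h) = 2 + 1/h² − sqrt(2/15 + (1 − 2e₁/15)/h⁴) for h > 0. Then X₍₋₎ attains its global maximum over (0,∞) at h* = ((2e₁²/15) − e₁)^{1/4}, and the maximum value equals 2 − (15/2 − 225/(4e₁))^{−1/2}, which lies strictly between 2 − sqrt(2/15) and 2. -/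
/-!
Substituting `u = 1 / h ^ 2` and `k = 1 - 2 e₁ / 15 > 1` turns `X₍₋₎(h) - 2` into
`u - √(2 / 15 + k u ^ 2)`. For `b ≥ 0`, `k > 1` and `m = √(b (k - 1) / k)` one has the identity
`(k - 1) (b + k u ^ 2 - (u + m) ^ 2) = ((k - 1) u - m) ^ 2`, so `u - √(b + k u ^ 2) ≤ -m`, with
equality exactly when `k (k - 1) u ^ 2 = b`; for `b = 2 / 15` this means `h ^ 4 = 2 e₁ ^ 2 / 15 - e₁`.
Finally `m⁻² = 15 / 2 - 225 / (4 e₁)`, and `0 < m < √b` because `0 < (k - 1) / k < 1`.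
-/

open Real

section
variable {b k : ℝ}

theorem sub_sqrt_add_mul_sq_le (hb : 0 ≤ b) (hk : 1 < k) (u : ℝ) :
    u - √(b + k * u ^ 2) ≤ -√(b * (k - 1) / k) := by
  set m := √(b * (k - 1) / k)
  have hk0 : 0 < k := by linarith
  have hm : k * m ^ 2 = (k - 1) * b := by
    rw [sq_sqrt (div_nonneg (mul_nonneg hb (by linarith)) hk0.le)]
    field_simp
  have hsq : (k - 1) * (b + k * u ^ 2 - (u + m) ^ 2) = ((k - 1) * u - m) ^ 2 := by
    linear_combination -hm
  have : (u + m) ^ 2 ≤ b + k * u ^ 2 := by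
    have := nonneg_of_mul_nonneg_right (hsq ▸ sq_nonneg _) (sub_pos.2 hk)
    linarith
  linarith [le_sqrt_of_sq_le this]

theorem sub_sqrt_add_mul_sq_eq (hk : 1 ≤ k) {u : ℝ} (hu : 0 ≤ u)
    (hb : k * (k - 1) * u ^ 2 = b) :
    u - √(b + k * u ^ 2) = -√(b * (k - 1) / k) := by
  have hk0 : k ≠ 0 := by positivity
  have h₁ : b + k * u ^ 2 = (k * u) ^ 2 := by rw [← hb]; ring
  have h₂ : b * (k - 1) / k = ((k - 1) * u) ^ 2 := by rw [← hb]; field_simp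
  rw [h₁, h₂, sqrt_sq (by positivity), sqrt_sq (by nlinarith)]
  ring

theorem sqrt_mul_sub_one_div_mem_Ioo (hb : 0 < b) (hk : 1 < k) :
    √(b * (k - 1) / k) ∈ Set.Ioo 0 √b := by
  have hk1 : 0 < k - 1 := by linarith
  refine ⟨sqrt_pos.2 (by positivity), sqrt_lt_sqrt (by positivity) ?_⟩
  rw [div_lt_iff₀ (by positivity)]
  nlinarith

end

theorem inv_sqrt_fifteen_div_two_sub_eq {e : ℝ} (he : e < 0) :
    (√(15 / 2 - 225 / (4 * e)))⁻¹ = √(2 / 15 * (1 - 2 * e / 15 - 1) / (1 - 2 * e / 15)) := by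
  have : 15 - 2 * e ≠ 0 := by linarith
  have : e ≠ 0 := he.ne
  rw [← sqrt_inv]
  congr 1
  rw [inv_eq_iff_eq_inv]
  field_simp
  ring

theorem Xminus_max (e₁ : ℝ) (he₁ : e₁ < 0) :
    (2 + 1/((2 * e₁^2/15 - e₁) ^ ((1:ℝ)/4))^2
        - Real.sqrt (2/15 + (1 - 2 * e₁ / 15)/((2 * e₁^2/15 - e₁) ^ ((1:ℝ)/4))^4)
      = 2 - (Real.sqrt (15/2 - 225/(4 * e₁)))⁻¹) ∧
    (∀ h : ℝ, 0 < h →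
      2 + 1/h^2 - Real.sqrt (2/15 + (1 - 2 * e₁ / 15)/h^4)
        ≤ 2 - (Real.sqrt (15/2 - 225/(4 * e₁)))⁻¹) ∧
    2 - Real.sqrt (2/15) < 2 - (Real.sqrt (15/2 - 225/(4 * e₁)))⁻¹ ∧
    2 - (Real.sqrt (15/2 - 225/(4 * e₁)))⁻¹ < 2 := by
  have ha : 0 ≤ 2 * e₁ ^ 2 / 15 - e₁ := by nlinarith
  have hk : 1 < 1 - 2 * e₁ / 15 := by linarith
  rw [inv_sqrt_fifteen_div_two_sub_eq he₁]
  set k := 1 - 2 * e₁ / 15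
  have hu (h : ℝ) : k / h ^ 4 = k * (1 / h ^ 2) ^ 2 := by ring
  refine ⟨?_, fun h _ => ?_, ?_, ?_⟩
  · have h4 : ((2 * e₁ ^ 2 / 15 - e₁) ^ ((1 : ℝ) / 4)) ^ 4 = 2 * e₁ ^ 2 / 15 - e₁ := by
      simpa using rpow_inv_natCast_pow ha (n := 4) (by norm_num)
    rw [hu, add_sub_assoc, sub_sqrt_add_mul_sq_eq hk.le (by positivity), ← sub_eq_add_neg]
    have hka : 2 * e₁ ^ 2 / 15 - e₁ = 15 / 2 * (k * (k - 1)) := by simp only [k]; ring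
    have : k - 1 ≠ 0 := (sub_pos.2 hk).ne'
    have : k ≠ 0 := (zero_lt_one.trans hk).ne'
    rw [div_pow, ← pow_mul, h4, hka]
    field_simp
  · rw [hu, add_sub_assoc]
    linarith [sub_sqrt_add_mul_sq_le (b := 2 / 15) (by norm_num) hk (1 / h ^ 2)]
  · linarith [(sqrt_mul_sub_one_div_mem_Ioo (b := 2 / 15) (by norm_num) hk).2]
  · linarith [(sqrt_mul_sub_one_div_mem_Ioo (b := 2 / 15) (by norm_num) hk).1]
end

section
/- Let U ⊆ ℝ² be open and connected and let F : U → ℝ be continuous with the property that F has no local extremum in U (i.e. no point u ∈ U admits a neighborhood on which F(u) is a maximum or minimum of F). Then the open set M = {u ∈ U : F(u) ≠ 0} has no nonempty connected component N whose closure (in ℝ²) is a compact subset of U. -/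
/-!
Let `N` be a component of `M = {u ∈ U | F u ≠ 0}` with compact closure inside `U`. A point of
`closure N` where `F ≠ 0` lies in `M`, hence in `N`, so on `closure N \ N` the function `F`
vanishes. If `F > 0` somewhere on `N`, the maximum of `F` over the compact set `closure N` is
positive, so it is attained in the open set `N` and is a local maximum of `F`; if `F < 0`
somewhere, the minimum is. Either way `F` has a local extremum in `U`.
-/

open Set Topology

theorem closure_connectedComponentIn_inter_subset {X : Type*} [TopologicalSpace X]
    (M : Set X) (x : X) :
    closure (connectedComponentIn M x) ∩ M ⊆ connectedComponentIn M x := by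
  by_cases hx : x ∈ M
  · have hN := mem_connectedComponentIn hx
    refine IsPreconnected.subset_connectedComponentIn ?_ ⟨subset_closure hN, hx⟩
      inter_subset_right
    exact isPreconnected_connectedComponentIn.subset_closure
      (subset_inter subset_closure (connectedComponentIn_subset M x)) inter_subset_left
  · simp [connectedComponentIn_eq_empty hx]

theorem IsOpen.exists_isLocalMax_of_isCompact_closure {X : Type*} [TopologicalSpace X]
    {N : Set X} {F : X → ℝ} (hN : IsOpen N) (hc : IsCompact (closure N))
    (hF : ContinuousOn F (closure N)) (hpos : ∀ y ∈ closure N, 0 < F y → y ∈ N)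
    {x : X} (hx : x ∈ N) (hFx : 0 < F x) : ∃ a ∈ N, IsLocalMax F a := by
  obtain ⟨a, ha, hamax⟩ := hc.exists_isMaxOn ⟨x, subset_closure hx⟩ hF
  have haN : a ∈ N := hpos a ha (hFx.trans_le (hamax (subset_closure hx)))
  exact ⟨a, haN, Filter.mem_of_superset (hN.mem_nhds haN) fun y hy => hamax (subset_closure hy)⟩

theorem IsOpen.exists_isLocalExtr_of_isCompact_closure {X : Type*} [TopologicalSpace X]
    {N : Set X} {F : X → ℝ} (hN : IsOpen N) (hc : IsCompact (closure N))
    (hF : ContinuousOn F (closure N)) (hne : ∀ y ∈ closure N, F y ≠ 0 → y ∈ N)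
    {x : X} (hx : x ∈ N) (hFx : F x ≠ 0) : ∃ a ∈ N, IsLocalExtr F a := by
  rcases hFx.lt_or_gt with hneg | hpos
  · obtain ⟨a, haN, ha⟩ := hN.exists_isLocalMax_of_isCompact_closure (F := fun y => -F y) hc
      hF.neg (fun y hy hFy => hne y hy (neg_pos.mp hFy).ne) hx (neg_pos.mpr hneg)
    exact ⟨a, haN, Or.inl (by simpa using ha.neg : IsLocalMin F a)⟩
  · obtain ⟨a, haN, ha⟩ :=
      hN.exists_isLocalMax_of_isCompact_closure hc hF (fun y hy hFy => hne y hy hFy.ne') hx hpos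
    exact ⟨a, haN, Or.inr ha⟩

theorem no_compact_component_of_nonvanishing_general (U : Set (ℝ × ℝ))
    (hU : IsOpen U) (F : ℝ × ℝ → ℝ)
    (hF : ContinuousOn F U)
    (hmax : ∀ u ∈ U, ¬ IsLocalMaxOn F U u)
    (hmin : ∀ u ∈ U, ¬ IsLocalMinOn F U u) :
    ∀ x ∈ {u ∈ U | F u ≠ 0},
      ¬ (IsCompact (closure (connectedComponentIn {u ∈ U | F u ≠ 0} x)) ∧
        closure (connectedComponentIn {u ∈ U | F u ≠ 0} x) ⊆ U) := by
  intro x hx ⟨hcomp, hsub⟩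
  set M : Set (ℝ × ℝ) := {u ∈ U | F u ≠ 0}
  have hM : IsOpen M := hF.isOpen_inter_preimage hU isOpen_compl_singleton
  have hne : ∀ y ∈ closure (connectedComponentIn M x), F y ≠ 0 → y ∈ connectedComponentIn M x :=
    fun y hy hFy => closure_connectedComponentIn_inter_subset M x ⟨hy, hsub hy, hFy⟩
  obtain ⟨a, haN, ha⟩ := hM.connectedComponentIn.exists_isLocalExtr_of_isCompact_closure hcomp
    (hF.mono hsub) hne (mem_connectedComponentIn hx) hx.2
  have haU : a ∈ U := hsub (subset_closure haN)
  exact (ha.on U).elim (hmin a haU) (hmax a haU)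

theorem no_compact_component_of_nonvanishing (U : Set (ℝ × ℝ))
    (hU : IsOpen U) (hUc : IsConnected U) (F : ℝ × ℝ → ℝ)
    (hF : ContinuousOn F U)
    (hmax : ∀ u ∈ U, ¬ IsLocalMaxOn F U u)
    (hmin : ∀ u ∈ U, ¬ IsLocalMinOn F U u) :
    ∀ x ∈ {u ∈ U | F u ≠ 0},
      ¬ (IsCompact (closure (connectedComponentIn {u ∈ U | F u ≠ 0} x)) ∧
        closure (connectedComponentIn {u ∈ U | F u ≠ 0} x) ⊆ U) :=
  no_compact_component_of_nonvanishing_general U hU F hF hmax hmin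
end

section
/- Let f : (9/4, ∞) → ℝ be any function satisfying |f(x) − log x| ≤ 3/x for all x > 9/4. Fix α > 0, e₁, e₂ ∈ ℝ and define, for x > 9/4, F(x) = (x²/4 − x + 29/30)·(α²/x) − (x/2 + e₂/30 − 1) − (e₁·x)/(30·α²) − (x/2 − 1)·(2·log(α/√x) + f(x)). Then F(x)/x → s(α) as x → ∞, where s(α) = α²/4 − 1/2 − e₁/(30·α²) − log α. -/
/-!
With `ε x = f x - log x`, the quotient `F x / x` is a polynomial in `1/x` and `ε x`: the `-log x`
coming from `log (α / √x)` cancels against the `log x` inside `f x`. Both `1/x` and `ε x` tend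
to `0`, and the polynomial evaluated at `(0, 0)` is `s(α)`.
-/

open Filter Topology

theorem tendsto_zero_of_eventually_abs_le_div {g : ℝ → ℝ} {C : ℝ}
    (h : ∀ᶠ x in atTop, |g x| ≤ C / x) : Tendsto g atTop (𝓝 0) :=
  squeeze_zero_norm' h (tendsto_const_nhds.div_atTop tendsto_id)

theorem large_x_asymptotics (f : ℝ → ℝ)
    (hf : ∀ x : ℝ, 9/4 < x → |f x - Real.log x| ≤ 3/x)
    (α e₁ e₂ : ℝ) (hα : 0 < α) :
    Tendsto (fun x : ℝ =>
        ((x^2/4 - x + 29/30) * (α^2/x) - (x/2 + e₂/30 - 1)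
          - e₁ * x/(30 * α^2)
          - (x/2 - 1) * (2 * Real.log (α / Real.sqrt x) + f x)) / x)
      atTop (nhds (α^2/4 - 1/2 - e₁/(30 * α^2) - Real.log α)) := by
  have hε : Tendsto (fun x => f x - Real.log x) atTop (𝓝 0) :=
    tendsto_zero_of_eventually_abs_le_div ((eventually_gt_atTop (9/4)).mono hf)
  let G : ℝ × ℝ → ℝ := fun p => α^2 * (1/4 - p.1 + 29/30 * p.1^2) - 1/2 - (e₂/30 - 1) * p.1
    - e₁/(30 * α^2) - (1/2 - p.1) * (2 * Real.log α + p.2)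
  have hG : Tendsto G (𝓝 (0, 0)) (𝓝 (α^2/4 - 1/2 - e₁/(30 * α^2) - Real.log α)) := by
    convert (show Continuous G by fun_prop).tendsto (0, 0) using 2
    simp only [G]
    ring
  refine (hG.comp (tendsto_inv_atTop_zero.prodMk_nhds hε)).congr' ?_
  filter_upwards [eventually_gt_atTop 0] with x hx
  simp only [G, Function.comp_apply]
  rw [Real.log_div hα.ne' (Real.sqrt_pos.2 hx).ne', Real.log_sqrt hx.le]
  field_simp
  ring
end

section
/- Let K > 0 and Λ > 2160·K. Define H_min = sqrt( (K/29)·sqrt(1440² + 29·960·(Λ/K)) − 1440·K/29 ) and, for H > H_min, Ξ₍₋₎(H) = 1/6 − sqrt(1/1080 − 8K/(3H²) + 8ΛK/(9H⁴)). Then for every H > H_min the radicand 1/1080 − 8K/(3H²) + 8ΛK/(9H⁴) is nonnegative, Ξ₍₋₎(H) > 0, and the pair (ξ, H) = (Ξ₍₋₎(H), H) satisfies the massless consistency equation 0 = (1/960 − (6ξ−1)²/32)·H⁴ − 3·K·H² + Λ·K. -/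
/-!
Write `x = H²`. The radicand equals `P(x) / x²` with
`P(x) = (x - 1440 K)² / 1080 + 8/9 · K (Λ - 2160 K)`, which is positive once `Λ > 2160 K`.
The lower branch is positive iff the radicand is below `1/36`, i.e. iff
`Q(x) = 29/1080 · x² + 8/3 · K x - 8/9 · Λ K > 0`; the threshold `H_min²` is the positive root
of `Q`, and the other root is negative. Finally, squaring `6 Ξ₍₋₎ - 1 = -6 √R` turns the
consistency equation into the identity `x² / 960 - 9/8 · P(x) = 3 K x - Λ K`.
-/

noncomputable section

namespace Massless

def radicand (K Λ H : ℝ) : ℝ := 1/1080 - 8 * K/(3 * H^2) + 8 * Λ * K/(9 * H^4)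

/-- `H_min²`, the positive root of `Q`. -/
def thresholdSq (K Λ : ℝ) : ℝ :=
  (K/29) * Real.sqrt (1440^2 + 29 * 960 * (Λ/K)) - 1440 * K/29

variable {K Λ H x : ℝ}

theorem radicand_eq (hH : H ≠ 0) :
    radicand K Λ H = ((H^2 - 1440 * K)^2 / 1080 + 8/9 * K * (Λ - 2160 * K)) / H^4 := by
  unfold radicand
  field_simp
  ring

theorem radicand_pos (hK : 0 < K) (hΛ : 2160 * K < Λ) (hH : H ≠ 0) :
    0 < radicand K Λ H := by
  have : 0 < Λ - 2160 * K := sub_pos.2 hΛ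
  rw [radicand_eq hH]
  positivity

theorem quadratic_eq_mul_sub_thresholdSq (hK : 0 < K) (hΛ : 0 ≤ Λ) :
    29/1080 * x^2 + 8/3 * K * x - 8/9 * Λ * K
      = 29/1080 * (x - thresholdSq K Λ)
          * (x + K/29 * (Real.sqrt (1440^2 + 29 * 960 * (Λ/K)) + 1440)) := by
  have hS : K^2 * Real.sqrt (1440^2 + 29 * 960 * (Λ/K)) ^ 2 = 1440^2 * K^2 + 27840 * Λ * K := by
    rw [Real.sq_sqrt (by positivity)]
    field_simp
    ring
  unfold thresholdSq
  linear_combination (1/31320) * hS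

theorem quadratic_pos_of_thresholdSq_lt (hK : 0 < K) (hΛ : 0 ≤ Λ) (hx₀ : 0 < x)
    (hx : thresholdSq K Λ < x) :
    0 < 29/1080 * x^2 + 8/3 * K * x - 8/9 * Λ * K := by
  rw [quadratic_eq_mul_sub_thresholdSq hK hΛ]
  have := sub_pos.2 hx
  positivity

theorem radicand_lt_of_thresholdSq_lt (hK : 0 < K) (hΛ : 0 ≤ Λ) (hH : H ≠ 0)
    (hx : thresholdSq K Λ < H^2) :
    radicand K Λ H < (1/6)^2 := by
  have hQ := quadratic_pos_of_thresholdSq_lt hK hΛ (by positivity) hx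
  rw [radicand_eq hH, div_lt_iff₀ (by positivity)]
  nlinarith

theorem consistency_lower_branch (hH : H ≠ 0) (hR : 0 ≤ radicand K Λ H) :
    (1/960 - (6 * (1/6 - Real.sqrt (radicand K Λ H)) - 1)^2 / 32) * H^4
      - 3 * K * H^2 + Λ * K = 0 := by
  have hsq : (6 * (1/6 - Real.sqrt (radicand K Λ H)) - 1)^2 = 36 * radicand K Λ H := by
    linear_combination 36 * Real.sq_sqrt hR
  rw [hsq, radicand]
  field_simp
  ring

end Massless

end

open Massless in
theorem massless_lower_xi_branch (K Λ : ℝ) (hK : 0 < K) (hΛ : 2160 * K < Λ) :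
    ∀ H : ℝ,
      Real.sqrt ((K/29) * Real.sqrt (1440^2 + 29 * 960 * (Λ/K)) - 1440 * K/29) < H →
      0 ≤ 1/1080 - 8 * K/(3 * H^2) + 8 * Λ * K/(9 * H^4) ∧
      0 < 1/6 - Real.sqrt (1/1080 - 8 * K/(3 * H^2) + 8 * Λ * K/(9 * H^4)) ∧
      0 = (1/960 - (6 * (1/6 - Real.sqrt (1/1080 - 8 * K/(3 * H^2) + 8 * Λ * K/(9 * H^4))) - 1)^2 / 32) * H^4
          - 3 * K * H^2 + Λ * K := by
  intro H hHmin
  have hH : 0 < H := (Real.sqrt_nonneg _).trans_lt hHmin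
  have hΛ₀ : 0 ≤ Λ := by linarith
  have hx : thresholdSq K Λ < H^2 := (Real.sqrt_lt' hH).1 hHmin
  have hR : 0 < radicand K Λ H := radicand_pos hK hΛ hH.ne'
  have hR36 : radicand K Λ H < (1/6)^2 := radicand_lt_of_thresholdSq_lt hK hΛ₀ hH.ne' hx
  refine ⟨hR.le, ?_, (consistency_lower_branch hH.ne' hR.le).symm⟩
  exact sub_pos.2 ((Real.sqrt_lt' (by norm_num)).2 hR36)
end

section
/- Let a : ℝ → ℝ be a positive differentiable function and ρ, p : ℝ → ℝ differentiable functions satisfying the Friedmann (energy) equation 3·(a'(t)/a(t))² = κ·ρ(t) + Λ and the continuity equation ρ'(t) + 3·(a'(t)/a(t))·(ρ(t) + p(t)) = 0 for all t, with κ ≠ 0. Then at every t with a'(t) ≠ 0, the second Friedmann (pressure/trace-type) equation holds: 2·a''(t)/a(t) + (a'(t)/a(t))² = −κ·p(t) + Λ. -/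
/-! With the Hubble rate `H = a'/a`, differentiating the energy equation `3 H² = κ ρ + Λ` gives
`6 H H' = κ ρ'`, and the continuity equation turns this into `6 H H' = -3 κ H (ρ + p)`.
Where `H ≠ 0` one may divide by `3 H`, giving `2 H' = -κ (ρ + p)`; substituting
`H' = a''/a - H²` and `κ ρ = 3 H² - Λ` yields the trace equation. -/

theorem hasDerivAt_logDeriv {𝕜 : Type*} [NontriviallyNormedField 𝕜] {f : 𝕜 → 𝕜} {x : 𝕜}
    (hf : DifferentiableAt 𝕜 f x) (hf' : DifferentiableAt 𝕜 (deriv f) x) (hx : f x ≠ 0) :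
    HasDerivAt (logDeriv f) (deriv (deriv f) x / f x - logDeriv f x ^ 2) x := by
  refine (hf'.hasDerivAt.div hf.hasDerivAt hx).congr_deriv ?_
  rw [logDeriv_apply]
  field_simp

theorem two_mul_hubble_deriv_eq {H ρ p : ℝ → ℝ} {κ Λ t H' : ℝ} (hH : HasDerivAt H H' t)
    (hHt : H t ≠ 0) (hFried : ∀ s, 3 * H s ^ 2 = κ * ρ s + Λ)
    (hCont : deriv ρ t + 3 * H t * (ρ t + p t) = 0) :
    2 * H' = -κ * (ρ t + p t) := by
  have hEnergy : κ * deriv ρ t = 3 * (2 * H t * H') := by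
    have hSq : HasDerivAt (fun s => κ * ρ s + Λ) (3 * (2 * H t * H')) t := by
      simpa [← hFried] using (hH.pow 2).const_mul 3
    rw [← hSq.deriv, deriv_add_const, deriv_const_mul_field]
  have h3H : 3 * H t ≠ 0 := mul_ne_zero three_ne_zero hHt
  refine mul_left_cancel₀ h3H ?_
  linear_combination -hEnergy + κ * hCont

theorem friedmann_trace_equation_general (a ρ p : ℝ → ℝ) (κ Λ : ℝ)
    (ha : Differentiable ℝ a) (hapos : ∀ t, 0 < a t)
    (ha' : Differentiable ℝ (deriv a))
    (hFried : ∀ t, 3 * (deriv a t / a t)^2 = κ * ρ t + Λ)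
    (hCont : ∀ t, deriv ρ t + 3 * (deriv a t / a t) * (ρ t + p t) = 0) :
    ∀ t, deriv a t ≠ 0 →
      2 * deriv (deriv a) t / a t + (deriv a t / a t)^2 = -κ * p t + Λ := by
  intro t ha't
  have hat : a t ≠ 0 := (hapos t).ne'
  have hAccel := two_mul_hubble_deriv_eq (hasDerivAt_logDeriv (ha t) (ha' t) hat)
    (div_ne_zero ha't hat) hFried (hCont t)
  rw [logDeriv_apply] at hAccel
  linear_combination hAccel + hFried t

theorem friedmann_trace_equation (a ρ p : ℝ → ℝ) (κ Λ : ℝ) (hκ : κ ≠ 0)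
    (ha : Differentiable ℝ a) (hapos : ∀ t, 0 < a t)
    (ha' : Differentiable ℝ (deriv a))
    (hρ : Differentiable ℝ ρ) (hp : Differentiable ℝ p)
    (hFried : ∀ t, 3 * (deriv a t / a t)^2 = κ * ρ t + Λ)
    (hCont : ∀ t, deriv ρ t + 3 * (deriv a t / a t) * (ρ t + p t) = 0) :
    ∀ t, deriv a t ≠ 0 →
      2 * deriv (deriv a) t / a t + (deriv a t / a t)^2 = -κ * p t + Λ :=
  friedmann_trace_equation_general a ρ p κ Λ ha hapos ha' hFried hCont
end
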